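/- Let (W, S) be a Coxeter system with length function ℓ, and let σ be a group automorphism of W with σ(S) = S. Let C ⊆ W be a σ-conjugacy class that contains some σ-straight element. Then an element of C is of minimal length in C if and only if it is σ-straight; in particular, all σ-straight elements of C have the same length, and the minimal length of elements of C equals the common length of its σ-straight elements. -/

import Mathlib

/-!
Twisted conjugation by `y` changes each `g_m` by at most `2 ℓ(y)` in length, while
`ℓ(g_m(w)) ≤ m ℓ(w)` always. If `w` is `σ`-straight and `w' = y w σ(y)⁻¹`, then
`m ℓ(w) ≤ m ℓ(w') + 2 ℓ(y)` for every `m`, so `ℓ(w) ≤ ℓ(w')`.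

Conversely, let `w = y w₀ σ(y)⁻¹` with `w₀` straight and `ℓ(w) ≤ ℓ(w₀)`. If
`ℓ(g_k(w)) < k ℓ(w)`, then `g_{nk}(w)`, a product of `n` twisted copies of `g_k(w)`, has
length at most `nk ℓ(w) - n`, whereas `nk ℓ(w₀) ≤ ℓ(g_{nk}(w)) + 2 ℓ(y)`; this fails for
`n > 2 ℓ(y)`.
-/

/-- For an automorphism `σ` of a group `W` and `w ∈ W`, the twisted product
`g_m(w) = w · σ(w) · σ²(w) ⋯ σ^{m−1}(w)`. -/
def twistProd {W : Type*} [Group W] (σ : W → W) (w : W) (m : ℕ) : W :=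
  ((List.range m).map fun i => σ^[i] w).prod

def IsSigmaStraight {B W : Type*} [Group W] {M : CoxeterMatrix B}
    (cs : CoxeterSystem M W) (σ : W ≃* W) (w : W) : Prop :=
  ∀ m : ℕ, 1 ≤ m → cs.length (twistProd σ w m) = m * cs.length w

section TwistProd

variable {W F : Type*} [Group W] [FunLike F W W] [MonoidHomClass F W W]

theorem twistProd_succ (σ : W → W) (w : W) (m : ℕ) :
    twistProd σ w (m + 1) = twistProd σ w m * σ^[m] w := by
  simp [twistProd, List.range_succ]

theorem twistProd_add (σ : F) (w : W) (m k : ℕ) :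
    twistProd σ w (m + k) = twistProd σ w m * σ^[m] (twistProd σ w k) := by
  induction k with
  | zero => simp [twistProd]
  | succ k ih =>
    rw [← add_assoc, twistProd_succ, ih, twistProd_succ, iterate_map_mul, mul_assoc,
      ← Function.iterate_add_apply]

theorem twistProd_mul (σ : F) (w : W) (k n : ℕ) :
    twistProd σ w (k * n) = twistProd (⇑σ)^[k] (twistProd σ w k) n := by
  induction n with
  | zero => rfl
  | succ n ih =>
    rw [Nat.mul_succ, twistProd_add, ih, twistProd_succ, ← Function.iterate_mul]

theorem twistProd_twistedConj (σ : F) (y w : W) (m : ℕ) :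
    twistProd σ (y * w * (σ y)⁻¹) m = y * twistProd σ w m * ((⇑σ)^[m] y)⁻¹ := by
  induction m with
  | zero => simp [twistProd]
  | succ m ih =>
    rw [twistProd_succ, ih, twistProd_succ, iterate_map_mul, iterate_map_mul, iterate_map_inv,
      ← Function.iterate_succ_apply]
    group

end TwistProd

namespace CoxeterSystem

variable {B W : Type*} [Group W] {M : CoxeterMatrix B} (cs : CoxeterSystem M W)

theorem length_map_le {F : Type*} [FunLike F W W] [MonoidHomClass F W W] (φ : F)
    (hφ : ∀ i, φ (cs.simple i) ∈ Set.range cs.simple) (w : W) :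
    cs.length (φ w) ≤ cs.length w := by
  have length_map_wordProd_le : ∀ ω, cs.length (φ (cs.wordProd ω)) ≤ ω.length := by
    intro ω
    induction ω with
    | nil => simp
    | cons i ω ih =>
      obtain ⟨j, hj⟩ := hφ i
      calc cs.length (φ (cs.wordProd (i :: ω)))
          ≤ cs.length (φ (cs.simple i)) + cs.length (φ (cs.wordProd ω)) := by
            rw [wordProd_cons, map_mul]; exact cs.length_mul_le _ _
        _ ≤ 1 + ω.length := by rw [← hj, length_simple]; omega
        _ = (i :: ω).length := by simp [add_comm]
  obtain ⟨ω, hω, rfl⟩ := cs.exists_isReduced w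
  exact (length_map_wordProd_le ω).trans hω.eq.ge

theorem length_map_of_image_simple (σ : W ≃* W)
    (hσS : ⇑σ '' Set.range cs.simple = Set.range cs.simple) (w : W) :
    cs.length (σ w) = cs.length w := by
  have hσ_simple : ∀ i, σ (cs.simple i) ∈ Set.range cs.simple := fun i =>
    hσS ▸ Set.mem_image_of_mem σ (Set.mem_range_self i)
  have hσ_symm_simple : ∀ i, σ.symm (cs.simple i) ∈ Set.range cs.simple := by
    intro i
    obtain ⟨x, hx, hxi⟩ : cs.simple i ∈ ⇑σ '' Set.range cs.simple := by
      rw [hσS]; exact Set.mem_range_self i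
    rwa [← hxi, MulEquiv.symm_apply_apply]
  refine le_antisymm (cs.length_map_le σ hσ_simple w) ?_
  simpa using cs.length_map_le σ.symm hσ_symm_simple (σ w)

theorem length_iterate {σ : W → W} (hσ : ∀ w, cs.length (σ w) = cs.length w) (n : ℕ)
    (w : W) : cs.length (σ^[n] w) = cs.length w := by
  induction n with
  | zero => rfl
  | succ n ih => rw [Function.iterate_succ_apply', hσ, ih]

theorem length_twistProd_le {σ : W → W} (hσ : ∀ w, cs.length (σ w) = cs.length w) (w : W)
    (m : ℕ) : cs.length (twistProd σ w m) ≤ m * cs.length w := by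
  induction m with
  | zero => simp [twistProd]
  | succ m ih =>
    calc cs.length (twistProd σ w (m + 1))
        ≤ cs.length (twistProd σ w m) + cs.length (σ^[m] w) := by
          rw [twistProd_succ]; exact cs.length_mul_le _ _
      _ ≤ (m + 1) * cs.length w := by rw [cs.length_iterate hσ]; linarith

variable {F : Type*} [FunLike F W W] [MonoidHomClass F W W] {σ : F}

theorem length_twistProd_le_twistedConj (hσ : ∀ w, cs.length (σ w) = cs.length w) (y w : W)
    (m : ℕ) : cs.length (twistProd σ w m) ≤
      cs.length (twistProd σ (y * w * (σ y)⁻¹) m) + 2 * cs.length y := by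
  have hw : twistProd σ w m = y⁻¹ * twistProd σ (y * w * (σ y)⁻¹) m * (⇑σ)^[m] y := by
    rw [twistProd_twistedConj]; group
  set v := twistProd σ (y * w * (σ y)⁻¹) m
  calc cs.length (twistProd σ w m)
      ≤ cs.length y⁻¹ + cs.length v + cs.length ((⇑σ)^[m] y) := by
        rw [hw]
        exact (cs.length_mul_le _ _).trans (Nat.add_le_add_right (cs.length_mul_le _ _) _)
    _ = cs.length v + 2 * cs.length y := by
        rw [length_inv, cs.length_iterate hσ]; ring

end CoxeterSystem

open CoxeterSystem

section Straight

variable {B W : Type*} [Group W] {M : CoxeterMatrix B} (cs : CoxeterSystem M W) {σ : W ≃* W}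

theorem IsSigmaStraight.length_le_twistedConj (hσ : ∀ w, cs.length (σ w) = cs.length w)
    {w : W} (hw : IsSigmaStraight cs σ w) (y : W) :
    cs.length w ≤ cs.length (y * w * (σ y)⁻¹) := by
  set m := 2 * cs.length y + 1
  have hm : m * cs.length w ≤ m * cs.length (y * w * (σ y)⁻¹) + 2 * cs.length y := by
    rw [← hw m (by omega)]
    exact (cs.length_twistProd_le_twistedConj hσ y w m).trans
      (Nat.add_le_add_right (cs.length_twistProd_le hσ _ m) _)
  by_contra! hlt
  have := Nat.mul_le_mul_left m hlt
  rw [Nat.mul_succ] at this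
  omega

theorem IsSigmaStraight.twistedConj_of_length_le (hσ : ∀ w, cs.length (σ w) = cs.length w)
    {w₀ : W} (hw₀ : IsSigmaStraight cs σ w₀) (y : W)
    (hlen : cs.length (y * w₀ * (σ y)⁻¹) ≤ cs.length w₀) :
    IsSigmaStraight cs σ (y * w₀ * (σ y)⁻¹) := by
  set w := y * w₀ * (σ y)⁻¹
  intro k hk
  refine le_antisymm (cs.length_twistProd_le hσ w k) ?_
  by_contra! hdefect
  set n := 2 * cs.length y + 1
  have hσk : ∀ v, cs.length ((⇑σ)^[k] v) = cs.length v := cs.length_iterate hσ k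
  have hupper : cs.length (twistProd σ w (k * n)) ≤ n * cs.length (twistProd σ w k) := by
    rw [twistProd_mul]; exact cs.length_twistProd_le hσk _ n
  have hlower :
      k * n * cs.length w₀ ≤ cs.length (twistProd σ w (k * n)) + 2 * cs.length y := by
    rw [← hw₀ (k * n) (Nat.one_le_iff_ne_zero.mpr (by positivity))]
    exact cs.length_twistProd_le_twistedConj hσ y w₀ (k * n)
  have hloss : n * (cs.length (twistProd σ w k) + 1) ≤ n * (k * cs.length w₀) :=
    Nat.mul_le_mul_left n (hdefect.trans_le (Nat.mul_le_mul_left k hlen))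
  rw [mul_add, mul_one, ← mul_assoc, mul_comm n k] at hloss
  omega

end Straight

/-- Let `(W, S)` be a Coxeter system, `σ` an automorphism of `W` with `σ(S) = S`,
and `C` a `σ`-conjugacy class containing a `σ`-straight element. Then an element
of `C` has minimal length in `C` iff it is `σ`-straight; in particular all
`σ`-straight elements of `C` have the same length. -/
theorem minimal_length_iff_straight {B W : Type*} [Group W] {M : CoxeterMatrix B}
    (cs : CoxeterSystem M W) (σ : W ≃* W)
    (hσS : ⇑σ '' Set.range cs.simple = Set.range cs.simple)
    (C : Set W) (hC : ∃ w₀ : W, C = {w' : W | ∃ x : W, w' = x * w₀ * (σ x)⁻¹})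
    (hstraight : ∃ w ∈ C, IsSigmaStraight cs σ w) :
    (∀ w ∈ C, ((∀ w' ∈ C, cs.length w ≤ cs.length w') ↔ IsSigmaStraight cs σ w)) ∧
    (∀ w ∈ C, ∀ w' ∈ C, IsSigmaStraight cs σ w → IsSigmaStraight cs σ w' →
      cs.length w = cs.length w') := by
  obtain ⟨w₀, hw₀, hstraight₀⟩ := hstraight
  have hσ := cs.length_map_of_image_simple σ hσS
  have hconj : ∀ w ∈ C, ∀ w' ∈ C, ∃ y, w' = y * w * (σ y)⁻¹ := by
    obtain ⟨c, rfl⟩ := hC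
    rintro _ ⟨a, rfl⟩ _ ⟨b, rfl⟩
    exact ⟨b * a⁻¹, by simp only [map_mul, map_inv]; group⟩
  have hmin : ∀ w ∈ C, IsSigmaStraight cs σ w → ∀ w' ∈ C, cs.length w ≤ cs.length w' := by
    intro w hw hstr w' hw'
    obtain ⟨y, rfl⟩ := hconj w hw w' hw'
    exact hstr.length_le_twistedConj cs hσ y
  refine ⟨fun w hw => ⟨fun hwmin => ?_, fun hstr => hmin w hw hstr⟩,
    fun w hw w' hw' hstr hstr' => le_antisymm (hmin w hw hstr w' hw') (hmin w' hw' hstr' w hw)⟩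
  obtain ⟨y, rfl⟩ := hconj w₀ hw₀ w hw
  exact hstraight₀.twistedConj_of_length_le cs hσ y (hwmin w₀ hw₀)
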